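/- Bäcklund transformation theorem for vessels: let (A, B(x), X(x); σ₁, σ₂, γ, γ*(x)) be a finite-dimensional vessel on an interval I, i.e., d/dx(B σ₁) = −A B σ₂ − B γ, dX/dx = B σ₂ B*, A X + X A* + B σ₁ B* = 0, X(x) invertible self-adjoint, and γ*(x) = γ + σ₂ B* X⁻¹ B σ₁ − σ₁ B* X⁻¹ B σ₂. Fix λ ∉ spec(A) and suppose u : I → ℂᵖ is differentiable and satisfies −σ₁ u′(x) + (λ σ₂ + γ) u(x) = 0. Then y(x) := S(λ,x) u(x), with S(λ,x) = I − B(x)* X(x)⁻¹ (λI − A)⁻¹ B(x) σ₁, is differentiable and satisfies −σ₁ y′(x) + (λ σ₂ + γ*(x)) y(x) = 0. -/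

import Mathlib

/-!
Differentiating `S = 1 - B* X⁻¹ (λ - A)⁻¹ B σ₁` with the vessel conditions gives the
intertwining relation `σ₁ S' = (λσ₂ + γ*) S - σ₁ S σ₁⁻¹ (λσ₂ + γ)`: the Lyapunov equation,
conjugated by `X⁻¹`, removes every `A*`, and the resolvent identity `A (λ - A)⁻¹ = λ (λ - A)⁻¹ - 1`
removes every `A`. With this relation, `y = S u` satisfies the output LDE as soon as `u`
satisfies the input LDE.
-/

open Matrix

attribute [local instance] Matrix.normedAddCommGroup Matrix.normedSpace

open Filter Topology

section Calculus

variable {𝕜 𝔸 : Type*} [NontriviallyNormedField 𝕜] [NormedCommRing 𝔸] [NormedAlgebra 𝕜 𝔸]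
  {l m n : Type*} {x : 𝕜}

theorem Matrix.hasDerivAt_iff [Fintype n] {f : 𝕜 → Matrix m n 𝔸}
    {f' : Matrix m n 𝔸} :
    HasDerivAt f f' x ↔ ∀ i j, HasDerivAt (fun t => f t i j) (f' i j) x := by
  refine ⟨fun h i j => hasDerivAt_pi.mp (hasDerivAt_pi.mp h i) j, fun h => ?_⟩
  exact hasDerivAt_pi.mpr fun i => hasDerivAt_pi.mpr (h i)

theorem HasDerivAt.matrix_mul [Fintype l] [Fintype m] [Fintype n] {f : 𝕜 → Matrix l m 𝔸}
    {g : 𝕜 → Matrix m n 𝔸} {f' : Matrix l m 𝔸} {g' : Matrix m n 𝔸}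
    (hf : HasDerivAt f f' x) (hg : HasDerivAt g g' x) :
    HasDerivAt (fun t => f t * g t) (f' * g x + f x * g') x := by
  rw [Matrix.hasDerivAt_iff] at hf hg ⊢
  intro i j
  simp only [Matrix.add_apply, mul_apply, ← Finset.sum_add_distrib]
  exact HasDerivAt.fun_sum fun k _ => (hf i k).fun_mul (hg k j)

theorem HasDerivAt.matrix_mulVec [Fintype m] [Fintype n] {f : 𝕜 → Matrix m n 𝔸}
    {v : 𝕜 → n → 𝔸} {f' : Matrix m n 𝔸} {v' : n → 𝔸}
    (hf : HasDerivAt f f' x) (hv : HasDerivAt v v' x) :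
    HasDerivAt (fun t => f t *ᵥ v t) (f' *ᵥ v x + f x *ᵥ v') x := by
  rw [hasDerivAt_pi]
  intro i
  simp only [Pi.add_apply, mulVec, dotProduct, ← Finset.sum_add_distrib]
  exact HasDerivAt.fun_sum fun k _ =>
    (Matrix.hasDerivAt_iff.mp hf i k).fun_mul (hasDerivAt_pi.mp hv k)

theorem HasDerivAt.of_matrix_mul_isUnit [Fintype m] [Fintype n] [DecidableEq n]
    {f : 𝕜 → Matrix m n 𝔸} {c : Matrix n n 𝔸} {g' : Matrix m n 𝔸} (hc : IsUnit c)
    (hf : HasDerivAt (fun t => f t * c) g' x) :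
    HasDerivAt f (g' * c⁻¹) x := by
  have h := hf.matrix_mul (hasDerivAt_const x c⁻¹)
  simpa only [Matrix.mul_zero, add_zero, Matrix.mul_assoc,
    mul_nonsing_inv c ((isUnit_iff_isUnit_det c).mp hc), Matrix.mul_one] using h

end Calculus

theorem HasDerivAt.matrix_conjTranspose {m n : Type*} [Fintype m] [Fintype n]
    {f : ℝ → Matrix m n ℂ} {f' : Matrix m n ℂ} {x : ℝ} (hf : HasDerivAt f f' x) :
    HasDerivAt (fun t => (f t)ᴴ) f'ᴴ x := by
  rw [Matrix.hasDerivAt_iff] at hf ⊢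
  exact fun i j => (hf j i).star

theorem HasDerivAt.matrix_inv {𝕜 𝔸 : Type*} [NontriviallyNormedField 𝕜] [NormedField 𝔸]
    [NormedAlgebra 𝕜 𝔸] {n : Type*} [Fintype n] [DecidableEq n] {x : 𝕜}
    {X : 𝕜 → Matrix n n 𝔸} {X' : Matrix n n 𝔸} (hX : HasDerivAt X X' x) (hunit : IsUnit (X x)) :
    HasDerivAt (fun t => (X t)⁻¹) (-((X x)⁻¹ * X' * (X x)⁻¹)) x := by
  have hdet : (X x).det ≠ 0 := ((isUnit_iff_isUnit_det _).mp hunit).ne_zero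
  have hcont : ContinuousAt (fun t => (X t)⁻¹) x := by
    refine (continuousAt_matrix_inv _ ?_).comp hX.continuousAt
    simpa only [Ring.inverse_eq_inv'] using continuousAt_inv₀ hdet
  have hunit_near : ∀ᶠ t in 𝓝 x, IsUnit (X t).det := by
    filter_upwards [(continuous_id.matrix_det.continuousAt.comp hX.continuousAt).eventually_ne
      hdet] with t ht
    exact isUnit_iff_ne_zero.mpr ht
  have hslope : (fun t => -((X t)⁻¹ * slope X x t * (X x)⁻¹)) =ᶠ[𝓝[≠] x]
      slope (fun t => (X t)⁻¹) x := by
    filter_upwards [nhdsWithin_le_nhds hunit_near] with t ht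
    have hdiff : (X t)⁻¹ - (X x)⁻¹ = -((X t)⁻¹ * (X t - X x) * (X x)⁻¹) := by
      rw [Matrix.mul_sub, Matrix.sub_mul, nonsing_inv_mul _ ht, Matrix.one_mul, Matrix.mul_assoc,
        mul_nonsing_inv _ (isUnit_iff_ne_zero.mpr hdet), Matrix.mul_one, neg_sub]
    simp only [slope_def_module, hdiff, Matrix.mul_smul, Matrix.smul_mul, smul_neg]
  refine hasDerivAt_iff_tendsto_slope.mpr (Tendsto.congr' hslope ?_)
  exact (((hcont.tendsto.mono_left nhdsWithin_le_nhds).mul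
    (hasDerivAt_iff_tendsto_slope.mp hX)).mul tendsto_const_nhds).neg

theorem hasDerivAt_transfer {m n : Type*} [Fintype m] [Fintype n] [DecidableEq m]
    {B : ℝ → Matrix n m ℂ} {Z : ℝ → Matrix n n ℂ} {B' : Matrix n m ℂ} {Z' : Matrix n n ℂ}
    {x : ℝ} (hB : HasDerivAt B B' x) (hZ : HasDerivAt Z Z' x) (R : Matrix n n ℂ)
    (σ : Matrix m m ℂ) :
    HasDerivAt (fun t => 1 - (B t)ᴴ * Z t * R * B t * σ)
      (-(B'ᴴ * Z x * R * B x * σ + (B x)ᴴ * Z' * R * B x * σ + (B x)ᴴ * Z x * R * B' * σ)) x := by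
  have h := (hasDerivAt_const x (1 : Matrix m m ℂ)).sub
    ((((hB.matrix_conjTranspose.matrix_mul hZ).matrix_mul (hasDerivAt_const x R)).matrix_mul
      hB).matrix_mul (hasDerivAt_const x σ))
  refine h.congr_deriv ?_
  simp only [Matrix.mul_zero, add_zero, zero_sub, Matrix.add_mul]

theorem lyapunov_inverse_conj {R : Type*} [Ring R] {a a' x z q : R} (hxz : x * z = 1)
    (hzx : z * x = 1) (h : a * x + x * a' + q = 0) : a' * z + z * a + z * q * z = 0 := by
  calc a' * z + z * a + z * q * z = z * (a * x + x * a' + q) * z := by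
        simp only [mul_add, add_mul, ← mul_assoc, hzx, one_mul]
        simp only [mul_assoc, hxz, mul_one]
        abel
    _ = 0 := by rw [h, mul_zero, zero_mul]

theorem Matrix.mul_resolvent {K n : Type*} [Field K] [Fintype n] [DecidableEq n]
    {A : Matrix n n K} {l : K} (hl : l ∉ spectrum K A) :
    A * (l • 1 - A)⁻¹ = l • (l • 1 - A)⁻¹ - 1 ∧ (l • 1 - A)⁻¹ * A = l • (l • 1 - A)⁻¹ - 1 := by
  have hu : IsUnit (l • 1 - A).det := by
    rw [← isUnit_iff_isUnit_det, ← Algebra.algebraMap_eq_smul_one]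
    exact spectrum.notMem_iff.mp hl
  have hright := mul_nonsing_inv _ hu
  have hleft := nonsing_inv_mul _ hu
  rw [Matrix.sub_mul, Matrix.smul_mul, Matrix.one_mul] at hright
  rw [Matrix.mul_sub, Matrix.mul_smul, Matrix.mul_one] at hleft
  exact ⟨eq_sub_of_add_eq' (sub_eq_iff_eq_add.mp hright).symm,
    eq_sub_of_add_eq' (sub_eq_iff_eq_add.mp hleft).symm⟩

theorem transfer_deriv_intertwining {m n : Type*} [Fintype m] [Fintype n] [DecidableEq m]
    [DecidableEq n] {σ₁ σ₂ γ : Matrix m m ℂ} {A Z R : Matrix n n ℂ} {B B' : Matrix n m ℂ} {l : ℂ}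
    (hσ₁ : σ₁.IsHermitian) (hσ₂ : σ₂.IsHermitian) (hγ : γᴴ = -γ)
    (hB' : B' * σ₁ = -(A * B * σ₂) - B * γ)
    (hLyap : Aᴴ * Z + Z * A + Z * (B * σ₁ * Bᴴ) * Z = 0)
    (hAR : A * R = l • R - 1) (hRA : R * A = l • R - 1) :
    σ₁ * -(B'ᴴ * Z * R * B * σ₁ + Bᴴ * -(Z * (B * σ₂ * Bᴴ) * Z) * R * B * σ₁
        + Bᴴ * Z * R * B' * σ₁)
      = (l • σ₂ + (γ + σ₂ * Bᴴ * Z * B * σ₁ - σ₁ * Bᴴ * Z * B * σ₂)) * (1 - Bᴴ * Z * R * B * σ₁)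
        - (1 - σ₁ * Bᴴ * Z * R * B) * (l • σ₂ + γ) := by
  have hB'_star : σ₁ * B'ᴴ - (γ * Bᴴ - σ₂ * Bᴴ * Aᴴ) = 0 := by
    rw [sub_eq_zero, ← hσ₁.eq, ← conjTranspose_mul, hB']
    simp only [conjTranspose_sub, conjTranspose_neg, conjTranspose_mul, hσ₂.eq, hγ,
      Matrix.neg_mul, Matrix.mul_assoc]
    abel
  rw [← sub_eq_zero]
  -- the difference is a combination of the five relations, each written as `_ = 0`
  calc _ = -((σ₁ * B'ᴴ - (γ * Bᴴ - σ₂ * Bᴴ * Aᴴ)) * Z * R * B * σ₁)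
        - σ₁ * Bᴴ * Z * R * (B' * σ₁ - (-(A * B * σ₂) - B * γ))
        + σ₂ * Bᴴ * (Aᴴ * Z + Z * A + Z * (B * σ₁ * Bᴴ) * Z) * R * B * σ₁
        - σ₂ * Bᴴ * Z * (A * R - (l • R - 1)) * B * σ₁
        + σ₁ * Bᴴ * Z * (R * A - (l • R - 1)) * B * σ₂ := by
        simp only [Matrix.mul_add, Matrix.add_mul, Matrix.mul_sub, Matrix.sub_mul,
          Matrix.neg_mul, Matrix.mul_neg, Matrix.mul_smul, Matrix.smul_mul,
          Matrix.mul_one, Matrix.one_mul, Matrix.mul_assoc, smul_sub]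
        abel
    _ = 0 := by
        rw [hB'_star, hB', hLyap, hAR, hRA]
        simp

-- `W` plays the role of `σ S σ⁻¹`, so that no inverse of `σ` is needed.
theorem mulVec_intertwine {R m : Type*} [CommRing R] [Fintype m]
    {σ S S' W Γ₁ Γ₂ : Matrix m m R} {u u' : m → R} (hW : W * σ = σ * S)
    (hS' : σ * S' = Γ₂ * S - W * Γ₁) (hu : σ *ᵥ u' = Γ₁ *ᵥ u) :
    -(σ *ᵥ (S' *ᵥ u + S *ᵥ u')) + Γ₂ *ᵥ (S *ᵥ u) = 0 := by
  have hSu' : σ *ᵥ (S *ᵥ u') = (W * Γ₁) *ᵥ u := by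
    rw [mulVec_mulVec, ← hW, ← mulVec_mulVec, hu, mulVec_mulVec]
  rw [mulVec_add, hSu', mulVec_mulVec, hS', mulVec_mulVec, sub_mulVec]
  abel

theorem stmt4_general {n p : ℕ}
    (σ₁ σ₂ γ : Matrix (Fin p) (Fin p) ℂ)
    (hσ₁ : σ₁.IsHermitian) (hσ₁inv : IsUnit σ₁) (hσ₂ : σ₂.IsHermitian)
    (hγ : γᴴ = -γ)
    (A : Matrix (Fin n) (Fin n) ℂ)
    (B : ℝ → Matrix (Fin n) (Fin p) ℂ) (X : ℝ → Matrix (Fin n) (Fin n) ℂ)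
    (hB : ∀ x : ℝ, HasDerivAt (fun y => B y * σ₁) (-(A * B x * σ₂) - B x * γ) x)
    (hX : ∀ x : ℝ, HasDerivAt X (B x * σ₂ * (B x)ᴴ) x)
    (hLyap : ∀ x : ℝ, A * X x + X x * Aᴴ + B x * σ₁ * (B x)ᴴ = 0)
    (hXinv : ∀ x : ℝ, IsUnit (X x))
    (γs : ℝ → Matrix (Fin p) (Fin p) ℂ)
    (hγs : ∀ x : ℝ, γs x = γ + σ₂ * (B x)ᴴ * (X x)⁻¹ * B x * σ₁
        - σ₁ * (B x)ᴴ * (X x)⁻¹ * B x * σ₂)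
    (l : ℂ) (hl : l ∉ spectrum ℂ A)
    (S : ℝ → Matrix (Fin p) (Fin p) ℂ)
    (hS : ∀ x : ℝ, S x = 1 - (B x)ᴴ * (X x)⁻¹ * (l • 1 - A)⁻¹ * B x * σ₁)
    (u u' : ℝ → Fin p → ℂ)
    (hu : ∀ x : ℝ, HasDerivAt u (u' x) x)
    (huLDE : ∀ x : ℝ, -(σ₁.mulVec (u' x)) + (l • σ₂ + γ).mulVec (u x) = 0)
    (y : ℝ → Fin p → ℂ) (hy : ∀ x : ℝ, y x = (S x).mulVec (u x)) :
    ∀ x : ℝ, ∃ d : Fin p → ℂ, HasDerivAt y d x ∧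
      -(σ₁.mulVec d) + (l • σ₂ + γs x).mulVec (y x) = 0 := by
  intro x
  obtain ⟨hAR, hRA⟩ := Matrix.mul_resolvent hl
  have hXdet := (isUnit_iff_isUnit_det _).mp (hXinv x)
  have hB' := (hB x).of_matrix_mul_isUnit hσ₁inv
  have hS' : HasDerivAt S _ x :=
    funext hS ▸ hasDerivAt_transfer hB' ((hX x).matrix_inv (hXinv x)) (l • 1 - A)⁻¹ σ₁
  refine ⟨_, funext hy ▸ hS'.matrix_mulVec (hu x), ?_⟩
  rw [hy x]
  refine mulVec_intertwine (W := 1 - σ₁ * (B x)ᴴ * (X x)⁻¹ * (l • 1 - A)⁻¹ * B x) ?_ ?_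
    (neg_add_eq_zero.mp (huLDE x))
  · simp only [hS x, Matrix.sub_mul, Matrix.mul_sub, Matrix.one_mul, Matrix.mul_one,
      Matrix.mul_assoc]
  · rw [hγs x, hS x]
    refine transfer_deriv_intertwining hσ₁ hσ₂ hγ ?_
      (lyapunov_inverse_conj (mul_nonsing_inv _ hXdet) (nonsing_inv_mul _ hXdet) (hLyap x))
      hAR hRA
    rw [Matrix.mul_assoc, nonsing_inv_mul _ ((isUnit_iff_isUnit_det _).mp hσ₁inv),
      Matrix.mul_one]

/-- Bäcklund transformation theorem: the transfer function `S(λ,x)` of a vessel maps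
solutions of the input LDE to solutions of the output LDE. -/
theorem stmt4 {n p : ℕ}
    (σ₁ σ₂ γ : Matrix (Fin p) (Fin p) ℂ)
    (hσ₁ : σ₁.IsHermitian) (hσ₁inv : IsUnit σ₁) (hσ₂ : σ₂.IsHermitian)
    (hγ : γᴴ = -γ)
    (A : Matrix (Fin n) (Fin n) ℂ)
    (B : ℝ → Matrix (Fin n) (Fin p) ℂ) (X : ℝ → Matrix (Fin n) (Fin n) ℂ)
    (hB : ∀ x : ℝ, HasDerivAt (fun y => B y * σ₁) (-(A * B x * σ₂) - B x * γ) x)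
    (hX : ∀ x : ℝ, HasDerivAt X (B x * σ₂ * (B x)ᴴ) x)
    (hLyap : ∀ x : ℝ, A * X x + X x * Aᴴ + B x * σ₁ * (B x)ᴴ = 0)
    (hXh : ∀ x : ℝ, (X x).IsHermitian) (hXinv : ∀ x : ℝ, IsUnit (X x))
    (γs : ℝ → Matrix (Fin p) (Fin p) ℂ)
    (hγs : ∀ x : ℝ, γs x = γ + σ₂ * (B x)ᴴ * (X x)⁻¹ * B x * σ₁
        - σ₁ * (B x)ᴴ * (X x)⁻¹ * B x * σ₂)
    (l : ℂ) (hl : l ∉ spectrum ℂ A)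
    (S : ℝ → Matrix (Fin p) (Fin p) ℂ)
    (hS : ∀ x : ℝ, S x = 1 - (B x)ᴴ * (X x)⁻¹ * (l • 1 - A)⁻¹ * B x * σ₁)
    (u u' : ℝ → Fin p → ℂ)
    (hu : ∀ x : ℝ, HasDerivAt u (u' x) x)
    (huLDE : ∀ x : ℝ, -(σ₁.mulVec (u' x)) + (l • σ₂ + γ).mulVec (u x) = 0)
    (y : ℝ → Fin p → ℂ) (hy : ∀ x : ℝ, y x = (S x).mulVec (u x)) :
    ∀ x : ℝ, ∃ d : Fin p → ℂ, HasDerivAt y d x ∧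
      -(σ₁.mulVec d) + (l • σ₂ + γs x).mulVec (y x) = 0 :=
  stmt4_general σ₁ σ₂ γ hσ₁ hσ₁inv hσ₂ hγ A B X hB hX hLyap hXinv γs hγs l hl S hS u u' hu huLDE y
    hy
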